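/- arXiv:2308.08497 — 2 statements merged into one kernel-verified Lean document; each statement's English description precedes it below -/
import Mathlib

section
/- Elliptic potential inequality (determinant form): with Ψ_t = λI + Σ_{k=1}^t v_k v_kᵀ and ‖v_k‖₂ ≤ C for all k, one has Σ_{t=1}^T v_tᵀ Ψ_{t-1}⁻¹ v_t ≤ 2 log(det Ψ_T / det(λI)), provided λ ≥ max(1, C²). -/
open Matrix BigOperators

section AuxEPD

variable {d : ℕ}

private lemma aux_vecMulVec_mulVec (w x : Fin d → ℝ) :
    (vecMulVec w w) *ᵥ x = (w ⬝ᵥ x) • w := by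
  ext i
  simp only [Matrix.mulVec, vecMulVec_apply, dotProduct, Pi.smul_apply, smul_eq_mul,
    Finset.mul_sum]
  rw [Finset.sum_mul]
  exact Finset.sum_congr rfl (fun j _ => by ring)

private lemma aux_posSemidef_vecMulVec (w : Fin d → ℝ) : (vecMulVec w w).PosSemidef := by
  refine Matrix.PosSemidef.of_dotProduct_mulVec_nonneg ?_ ?_
  · ext i j
    simp [Matrix.conjTranspose_apply, Matrix.vecMulVec_apply, mul_comm]
  · intro x
    rw [aux_vecMulVec_mulVec, dotProduct_smul]
    simp only [star_trivial, smul_eq_mul]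
    rw [dotProduct_comm]
    exact mul_self_nonneg _

private lemma aux_posDef_smul_one {lam : ℝ} (hlam : 0 < lam) :
    (lam • (1 : Matrix (Fin d) (Fin d) ℝ)).PosDef := by
  refine Matrix.PosDef.of_dotProduct_mulVec_pos ?_ ?_
  · ext i j
    simp [Matrix.conjTranspose_apply, Matrix.smul_apply, Matrix.one_apply]
    split <;> simp_all [eq_comm]
  · intro x hx
    have h1 : star x ⬝ᵥ ((lam • (1 : Matrix (Fin d) (Fin d) ℝ)) *ᵥ x) = lam * (x ⬝ᵥ x) := by
      simp [Matrix.smul_mulVec, Matrix.one_mulVec, smul_dotProduct]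
    rw [h1]
    have hxx : 0 < x ⬝ᵥ x := by
      rcases Function.ne_iff.mp hx with ⟨i, hi⟩
      calc (0:ℝ) < x i * x i := mul_self_pos.mpr hi
        _ ≤ x ⬝ᵥ x := Finset.single_le_sum (f := fun j => x j * x j)
            (fun j _ => mul_self_nonneg _) (Finset.mem_univ i)
    exact mul_pos hlam hxx

/-- The matrix determinant lemma, rank-one symmetric form. -/
private lemma aux_det_lemma {A : Matrix (Fin d) (Fin d) ℝ} (hA : IsUnit A.det) (u : Fin d → ℝ) :
    (A + vecMulVec u u).det = A.det * (1 + u ⬝ᵥ (A⁻¹ *ᵥ u)) := by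
  rw [vecMulVec_eq Unit, det_add_replicateCol_mul_replicateRow hA]
  congr 1
  rw [det_unique]
  simp only [Matrix.add_apply, Matrix.one_apply_eq, Matrix.mul_apply, Matrix.replicateRow_apply,
    Matrix.replicateCol_apply, dotProduct, Matrix.mulVec, Finset.sum_mul, Finset.mul_sum]
  congr 1
  rw [Finset.sum_comm]
  exact Finset.sum_congr rfl fun i _ => Finset.sum_congr rfl fun j _ => by ring

/-- `u ≤ 2 log (1 + u)` for `u ∈ [0,1]`. -/
private lemma aux_le_two_log {u : ℝ} (h0 : 0 ≤ u) (h1 : u ≤ 1) :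
    u ≤ 2 * Real.log (1 + u) := by
  have hpos : 0 < 1 + u := by linarith
  have h := Real.one_sub_inv_le_log_of_pos hpos
  have hinv : 1 - (1 + u)⁻¹ = u / (1 + u) := by field_simp; ring
  rw [hinv] at h
  have h2 : u / 2 ≤ u / (1 + u) :=
    div_le_div_of_nonneg_left h0 hpos (by linarith)
  linarith

end AuxEPD

/-- Elliptic potential inequality (determinant form): with
`Ψ_t = λI + Σ_{k<t} v_k v_kᵀ` and `‖v_k‖₂ ≤ C`, provided `λ ≥ max 1 C²`,
`Σ_{t<T} v_tᵀ Ψ_t⁻¹ v_t ≤ 2 log (det Ψ_T / det (λI))`. -/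
theorem elliptic_potential_det
    (d T : ℕ) (lam C : ℝ) (hlam : max 1 (C ^ 2) ≤ lam)
    (v : ℕ → (Fin d → ℝ)) (hv : ∀ k, Real.sqrt (v k ⬝ᵥ v k) ≤ C) :
    let Ψ : ℕ → Matrix (Fin d) (Fin d) ℝ := fun n =>
      lam • (1 : Matrix (Fin d) (Fin d) ℝ) + ∑ k ∈ Finset.range n, vecMulVec (v k) (v k)
    ∑ t ∈ Finset.range T, v t ⬝ᵥ ((Ψ t)⁻¹ *ᵥ v t) ≤
      2 * Real.log ((Ψ T).det / (lam • (1 : Matrix (Fin d) (Fin d) ℝ)).det) := by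
  intro Ψ
  have hΨdef : ∀ n, Ψ n =
      lam • (1 : Matrix (Fin d) (Fin d) ℝ) + ∑ k ∈ Finset.range n, vecMulVec (v k) (v k) :=
    fun n => rfl
  have hlam1 : (1:ℝ) ≤ lam := le_trans (le_max_left _ _) hlam
  have hlamC : C ^ 2 ≤ lam := le_trans (le_max_right _ _) hlam
  have hlam0 : (0:ℝ) < lam := lt_of_lt_of_le one_pos hlam1
  -- positive definiteness
  have hSumPSD : ∀ n, (∑ k ∈ Finset.range n, vecMulVec (v k) (v k)).PosSemidef := by
    intro n
    refine Finset.sum_induction _ _ (fun a b ha hb => ha.add hb) Matrix.PosSemidef.zero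
      (fun k _ => aux_posSemidef_vecMulVec _)
  have hPD : ∀ n, (Ψ n).PosDef := by
    intro n
    rw [hΨdef]
    exact (aux_posDef_smul_one hlam0).add_posSemidef (hSumPSD n)
  have hdetpos : ∀ n, 0 < (Ψ n).det := fun n => (hPD n).det_pos
  have hdetunit : ∀ n, IsUnit (Ψ n).det := fun n => isUnit_iff_ne_zero.mpr (hdetpos n).ne'
  set q : ℕ → ℝ := fun t => v t ⬝ᵥ ((Ψ t)⁻¹ *ᵥ v t) with hqdef
  -- q t ≥ 0
  have hq0 : ∀ t, 0 ≤ q t := by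
    intro t
    have h := ((hPD t).inv.posSemidef).dotProduct_mulVec_nonneg (v t)
    simpa [hqdef] using h
  -- q t ≤ 1
  have hq1 : ∀ t, q t ≤ 1 := by
    intro t
    set w : Fin d → ℝ := (Ψ t)⁻¹ *ᵥ v t with hwdef
    have hΨw : (Ψ t) *ᵥ w = v t := by
      rw [hwdef, Matrix.mulVec_mulVec, Matrix.mul_nonsing_inv _ (hdetunit t),
        Matrix.one_mulVec]
    have hq_eq : q t = w ⬝ᵥ ((Ψ t) *ᵥ w) := by
      rw [hΨw, hqdef]
      exact dotProduct_comm _ _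
    have hexpand : w ⬝ᵥ ((Ψ t) *ᵥ w) =
        lam * (w ⬝ᵥ w) + w ⬝ᵥ ((∑ k ∈ Finset.range t, vecMulVec (v k) (v k)) *ᵥ w) := by
      rw [hΨdef t, Matrix.add_mulVec, dotProduct_add, Matrix.smul_mulVec,
        Matrix.one_mulVec, dotProduct_smul, smul_eq_mul]
    have hpsd : 0 ≤ w ⬝ᵥ ((∑ k ∈ Finset.range t, vecMulVec (v k) (v k)) *ᵥ w) := by
      have h := (hSumPSD t).dotProduct_mulVec_nonneg w
      simpa using h
    have hlw : lam * (w ⬝ᵥ w) ≤ q t := by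
      rw [hq_eq, hexpand]; linarith
    have hww : 0 ≤ w ⬝ᵥ w := by
      simpa [dotProduct] using Finset.sum_nonneg
        (fun i (_ : i ∈ Finset.univ) => mul_self_nonneg (w i))
    have hvv0 : 0 ≤ v t ⬝ᵥ v t := by
      simpa [dotProduct] using Finset.sum_nonneg
        (fun i (_ : i ∈ Finset.univ) => mul_self_nonneg (v t i))
    have hvv : v t ⬝ᵥ v t ≤ C ^ 2 := by
      have h := hv t
      have := Real.sq_sqrt hvv0
      nlinarith [Real.sqrt_nonneg (v t ⬝ᵥ v t)]
    have hCS : (q t) ^ 2 ≤ (v t ⬝ᵥ v t) * (w ⬝ᵥ w) := by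
      have h := Finset.sum_mul_sq_le_sq_mul_sq Finset.univ (v t) w
      have hq : q t = v t ⬝ᵥ w := rfl
      rw [hq]
      simpa [dotProduct, pow_two] using h
    nlinarith [mul_le_mul_of_nonneg_right (hvv.trans hlamC) hww]
  -- determinant recursion
  have hdet : ∀ t, (Ψ (t+1)).det = (Ψ t).det * (1 + q t) := by
    intro t
    have hstep : Ψ (t+1) = Ψ t + vecMulVec (v t) (v t) := by
      rw [hΨdef, hΨdef, Finset.sum_range_succ, add_assoc]
    rw [hstep, aux_det_lemma (hdetunit t) (v t)]
  -- per-step log bound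
  have hkey : ∀ t, q t ≤ 2 * (Real.log (Ψ (t+1)).det - Real.log (Ψ t).det) := by
    intro t
    have h1q : (0:ℝ) < 1 + q t := by have := hq0 t; linarith
    have : Real.log (Ψ (t+1)).det = Real.log (Ψ t).det + Real.log (1 + q t) := by
      rw [hdet t, Real.log_mul (hdetpos t).ne' h1q.ne']
    rw [this]
    have := aux_le_two_log (hq0 t) (hq1 t)
    linarith
  -- telescoping
  have hmain : ∀ n, ∑ t ∈ Finset.range n, q t ≤
      2 * (Real.log (Ψ n).det - Real.log (Ψ 0).det) := by
    intro n
    induction n with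
    | zero => simp
    | succ n ih =>
      rw [Finset.sum_range_succ]
      have := hkey n
      linarith
  have hΨ0 : (lam • (1 : Matrix (Fin d) (Fin d) ℝ)).det = (Ψ 0).det := by
    rw [hΨdef]; simp
  calc ∑ t ∈ Finset.range T, v t ⬝ᵥ ((Ψ t)⁻¹ *ᵥ v t)
      = ∑ t ∈ Finset.range T, q t := rfl
    _ ≤ 2 * (Real.log (Ψ T).det - Real.log (Ψ 0).det) := hmain T
    _ = 2 * Real.log ((Ψ T).det / (lam • (1 : Matrix (Fin d) (Fin d) ℝ)).det) := by
        rw [hΨ0, Real.log_div (hdetpos T).ne' (hdetpos 0).ne']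
end

section
/- For a positive definite matrix Ψ = λI + Σ_{k=1}^T v_k v_kᵀ with ‖v_k‖₂ ≤ C, the determinant satisfies det(Ψ) ≤ (λ + T C² / d)^d, by the AM–GM inequality applied to the eigenvalues together with the trace bound tr(Ψ) ≤ λ d + T C². -/
open Matrix BigOperators Finset

/-!
`Ψ` is positive semidefinite, so its eigenvalues are nonnegative; AM–GM bounds their product
`det Ψ` by the `d`-th power of their mean `tr Ψ / d`, and `tr Ψ = λ d + Σ ‖v_k‖² ≤ λ d + T C²`.
-/

theorem Real.prod_le_arith_mean_pow {ι : Type*} (s : Finset ι) (z : ι → ℝ)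
    (hz : ∀ i ∈ s, 0 ≤ z i) : ∏ i ∈ s, z i ≤ ((∑ i ∈ s, z i) / #s) ^ #s := by
  rcases s.eq_empty_or_nonempty with rfl | hs
  · simp
  have hcard : (0 : ℝ) < #s := by exact_mod_cast hs.card_pos
  have amgm := Real.geom_mean_le_arith_mean s (fun _ ↦ 1) z (fun _ _ ↦ zero_le_one)
    (by simpa using hcard) hz
  simp only [Real.rpow_one, sum_const, nsmul_eq_mul, mul_one, one_mul] at amgm
  calc ∏ i ∈ s, z i = ((∏ i ∈ s, z i) ^ (#s : ℝ)⁻¹) ^ #s := by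
        rw [← Real.rpow_natCast, ← Real.rpow_mul (prod_nonneg hz), inv_mul_cancel₀ hcard.ne',
          Real.rpow_one]
    _ ≤ _ := by gcongr; exact Real.rpow_nonneg (prod_nonneg hz) _

theorem Matrix.PosSemidef.det_le_trace_div_card_pow {n : Type*} [Fintype n] [DecidableEq n]
    {A : Matrix n n ℝ} (hA : A.PosSemidef) :
    A.det ≤ (A.trace / Fintype.card n) ^ Fintype.card n := by
  rw [hA.isHermitian.det_eq_prod_eigenvalues, hA.isHermitian.trace_eq_sum_eigenvalues]
  simpa using Real.prod_le_arith_mean_pow univ _ fun i _ ↦ hA.eigenvalues_nonneg i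

theorem Matrix.posSemidef_smul_one_add_sum_vecMulVec {n ι : Type*} [Fintype n] [DecidableEq n]
    [Fintype ι] {lam : ℝ} (hlam : 0 ≤ lam) (v : ι → n → ℝ) :
    (lam • (1 : Matrix n n ℝ) + ∑ k, vecMulVec (v k) (v k)).PosSemidef :=
  (PosSemidef.one.smul hlam).add <| posSemidef_sum _ fun k _ ↦ by
    simpa using posSemidef_vecMulVec_self_star (v k)

theorem det_le_of_trace_bound_general
    (d T : ℕ) (lam C : ℝ) (hlam : 0 < lam)
    (v : Fin T → (Fin d → ℝ)) (hv : ∀ k, v k ⬝ᵥ v k ≤ C ^ 2) :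
    (lam • (1 : Matrix (Fin d) (Fin d) ℝ) + ∑ k, vecMulVec (v k) (v k)).det ≤
      (lam + (T : ℝ) * C ^ 2 / (d : ℝ)) ^ d := by
  set Ψ := lam • (1 : Matrix (Fin d) (Fin d) ℝ) + ∑ k, vecMulVec (v k) (v k)
  have hΨ : Ψ.PosSemidef := posSemidef_smul_one_add_sum_vecMulVec hlam.le v
  have hsum : ∑ k, v k ⬝ᵥ v k ≤ T * C ^ 2 := by
    simpa using sum_le_sum fun k (_ : k ∈ univ) ↦ hv k
  have htrace : Ψ.trace = lam * d + ∑ k, v k ⬝ᵥ v k := by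
    simp [Ψ, trace_sum]
  calc Ψ.det ≤ (Ψ.trace / d) ^ d := by simpa using hΨ.det_le_trace_div_card_pow
    _ ≤ _ := by
      gcongr
      · exact div_nonneg hΨ.trace_nonneg d.cast_nonneg
      rw [htrace, add_div, mul_div_assoc]
      gcongr
      exact mul_le_of_le_one_right hlam.le (div_self_le_one _)

/-- For `Ψ = λI + Σ_{k<T} v_k v_kᵀ` with `‖v_k‖₂² ≤ C²` and `λ > 0`,
`det Ψ ≤ (λ + T C² / d)^d`. -/
theorem det_le_of_trace_bound
    (d T : ℕ) (hd : 0 < d) (lam C : ℝ) (hlam : 0 < lam)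
    (v : Fin T → (Fin d → ℝ)) (hv : ∀ k, v k ⬝ᵥ v k ≤ C ^ 2) :
    (lam • (1 : Matrix (Fin d) (Fin d) ℝ) + ∑ k, vecMulVec (v k) (v k)).det ≤
      (lam + (T : ℝ) * C ^ 2 / (d : ℝ)) ^ d :=
  det_le_of_trace_bound_general d T lam C hlam v hv
end
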